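/- arXiv:1101.1050 — 9 statements merged into one kernel-verified Lean document; each statement's English description precedes it below -/
import Mathlib

section
/- For every nonnegative integer m, the sum over k from 0 to m of C(2k,k)^2 * C(3k,k) * C(k, m-k) * (-27)^(m-k) equals the sum over k from 0 to m of C(2k,k) * C(3k,k) * C(2(m-k), m-k) * C(3(m-k), m-k). -/
/-!
Both sides satisfy the recurrence
  `-81 (m+1)(3m+2)(3m+4) a(m) + 3 (2m+3)(9m²+27m+22) a(m+1) - (m+2)³ a(m+2) = 0`
and agree at `m = 0, 1`. The recurrence comes from creative telescoping: for each summand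
`F(m, k)` there is a rational certificate `G(m, k)` with
`p₀(m) F(m, k) + p₁(m) F(m+1, k) + p₂(m) F(m+2, k) = G(m, k+1) - G(m, k)`,
and summing over `k` telescopes; the few terms with `k ≥ m` cancel against `G(m, m)`.
-/

open Nat Finset

section CreativeTelescoping

variable {R : Type*} [CommRing R]

theorem recurrence_of_telescoping (c₀ c₁ c₂ : R) (F : ℕ → ℕ → R) (G : ℕ → R) (m : ℕ)
    (hstep : ∀ k < m, c₀ * F m k + c₁ * F (m + 1) k + c₂ * F (m + 2) k = G (k + 1) - G k)
    (hG : G 0 = 0)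
    (htail : c₀ * F m m + c₁ * (F (m + 1) m + F (m + 1) (m + 1))
        + c₂ * (F (m + 2) m + F (m + 2) (m + 1) + F (m + 2) (m + 2)) = -G m) :
    c₀ * ∑ k ∈ range (m + 1), F m k + c₁ * ∑ k ∈ range (m + 2), F (m + 1) k
      + c₂ * ∑ k ∈ range (m + 3), F (m + 2) k = 0 := by
  have htel : ∑ k ∈ range m, (c₀ * F m k + c₁ * F (m + 1) k + c₂ * F (m + 2) k) = G m := by
    rw [sum_congr rfl fun k hk => hstep k (mem_range.mp hk), sum_range_sub, hG, sub_zero]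
  rw [sum_add_distrib, sum_add_distrib, ← mul_sum, ← mul_sum, ← mul_sum] at htel
  simp only [sum_range_succ]
  linear_combination htel + htail

theorem eq_of_recurrence [IsDomain R] {a b c₀ c₁ c₂ : ℕ → R} (hc₂ : ∀ n, c₂ n ≠ 0)
    (ha : ∀ n, c₀ n * a n + c₁ n * a (n + 1) + c₂ n * a (n + 2) = 0)
    (hb : ∀ n, c₀ n * b n + c₁ n * b (n + 1) + c₂ n * b (n + 2) = 0)
    (h₀ : a 0 = b 0) (h₁ : a 1 = b 1) : a = b := by
  funext n
  induction n using Nat.twoStepInduction with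
  | zero => exact h₀
  | one => exact h₁
  | more n ih₀ ih₁ =>
    refine mul_left_cancel₀ (hc₂ n) ?_
    linear_combination ha n - hb n - c₀ n * ih₀ - c₁ n * ih₁

end CreativeTelescoping

theorem Nat.cast_choose_succ_right {K : Type*} [Field K] [CharZero K] (n r : ℕ) :
    (n.choose (r + 1) : K) = (n - r) * n.choose r / (r + 1) := by
  rw [eq_div_iff r.cast_add_one_ne_zero]
  rcases le_or_gt r n with h | h
  · rw [← Nat.cast_sub h, mul_comm _ (n.choose r : K)]
    exact_mod_cast Nat.choose_succ_right_eq n r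
  · simp [Nat.choose_eq_zero_of_lt h, Nat.choose_eq_zero_of_lt (h.trans r.lt_succ_self)]

theorem Nat.cast_choose_succ_succ {K : Type*} [Field K] [CharZero K] (n r : ℕ) :
    ((n + 1).choose (r + 1) : K) = (n + 1) * n.choose r / (r + 1) := by
  rw [eq_div_iff r.cast_add_one_ne_zero]
  exact_mod_cast (Nat.add_one_mul_choose_eq n r).symm

namespace TrinomialSums

def trinom (n : ℕ) : ℚ := (2 * n).choose n * (3 * n).choose n

def centralBinomTrinom (n : ℕ) : ℚ := ((2 * n).choose n : ℚ) ^ 2 * (3 * n).choose n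

theorem trinom_eq (n : ℕ) : trinom n = (3 * n)! / (n ! : ℚ) ^ 3 := by
  have h₂ : (2 * n).choose n = (2 * n)! / (n ! * n ! : ℚ) := by
    rw [Nat.cast_choose ℚ (by omega), show 2 * n - n = n by omega]
  have h₃ : (3 * n).choose n = (3 * n)! / (n ! * (2 * n)! : ℚ) := by
    rw [Nat.cast_choose ℚ (by omega), show 3 * n - n = 2 * n by omega]
  have := n.factorial_ne_zero
  have := (2 * n).factorial_ne_zero
  rw [trinom, h₂, h₃]
  field_simp

theorem trinom_zero : trinom 0 = 1 := by simp [trinom]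

theorem trinom_succ (n : ℕ) :
    trinom (n + 1) = 3 * (3 * n + 1) * (3 * n + 2) / (n + 1) ^ 2 * trinom n := by
  have := n.factorial_ne_zero
  rw [trinom_eq, trinom_eq, show 3 * (n + 1) = 3 * n + 1 + 1 + 1 by ring]
  simp only [Nat.factorial_succ]
  push_cast
  field_simp
  ring

theorem cast_choose_two_mul_succ (n : ℕ) :
    ((2 * (n + 1)).choose (n + 1) : ℚ) = 2 * (2 * n + 1) / (n + 1) * (2 * n).choose n := by
  rw [div_mul_eq_mul_div, eq_div_iff n.cast_add_one_ne_zero, mul_comm]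
  exact_mod_cast Nat.succ_mul_centralBinom_succ n

theorem centralBinomTrinom_eq (n : ℕ) : centralBinomTrinom n = (2 * n).choose n * trinom n := by
  rw [centralBinomTrinom, trinom]; ring

theorem centralBinomTrinom_succ (n : ℕ) :
    centralBinomTrinom (n + 1)
      = 6 * (2 * n + 1) * (3 * n + 1) * (3 * n + 2) / (n + 1) ^ 3 * centralBinomTrinom n := by
  have : (n + 1 : ℚ) ≠ 0 := n.cast_add_one_ne_zero
  rw [centralBinomTrinom_eq, centralBinomTrinom_eq, cast_choose_two_mul_succ, trinom_succ]
  field_simp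
  ring

/- The recurrence coefficients and both certificates were found with Zeilberger's algorithm. -/
def p₀ (m : ℕ) : ℚ := -81 * (m + 1) * (3 * m + 2) * (3 * m + 4)
def p₁ (m : ℕ) : ℚ := 3 * (2 * m + 3) * (9 * m ^ 2 + 27 * m + 22)
def p₂ (m : ℕ) : ℚ := -(m + 2) ^ 3

def lhsTerm (m k : ℕ) : ℚ := centralBinomTrinom k * k.choose (m - k) * (-27) ^ (m - k)

def lhsCert (m k : ℕ) : ℚ :=
  -729 * k ^ 2 * (m + 2) * (m + 1 - 2 * k) * centralBinomTrinom k
    * k.choose (m + 1 - k) * (-27) ^ (m - k) / (m - k + 2 : ℕ)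

theorem lhsTerm_telescoping {m k : ℕ} (hk : k < m) :
    p₀ m * lhsTerm m k + p₁ m * lhsTerm (m + 1) k + p₂ m * lhsTerm (m + 2) k
      = lhsCert m (k + 1) - lhsCert m k := by
  obtain ⟨j, rfl⟩ : ∃ j, m = k + (j + 1) := ⟨m - k - 1, by omega⟩
  simp only [p₀, p₁, p₂, lhsTerm, lhsCert, add_assoc, add_tsub_cancel_left,
    Nat.add_sub_add_left, Nat.reduceAdd, Nat.reduceSubDiff]
  rw [Nat.cast_choose_succ_succ]
  simp only [Nat.cast_choose_succ_right, centralBinomTrinom_succ, pow_succ]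
  have : (k + 1 : ℚ) ≠ 0 := k.cast_add_one_ne_zero
  push_cast
  field_simp
  ring

theorem lhsTerm_tail (m : ℕ) :
    p₀ m * lhsTerm m m + p₁ m * (lhsTerm (m + 1) m + lhsTerm (m + 1) (m + 1))
      + p₂ m * (lhsTerm (m + 2) m + lhsTerm (m + 2) (m + 1) + lhsTerm (m + 2) (m + 2))
      = -lhsCert m m := by
  simp only [p₀, p₁, p₂, lhsTerm, lhsCert, add_tsub_cancel_left, Nat.sub_self,
    Nat.add_sub_add_left, Nat.reduceSubDiff, centralBinomTrinom_succ, Nat.cast_choose_succ_right,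
    Nat.choose_zero_right]
  have : (m + 1 : ℚ) ≠ 0 := m.cast_add_one_ne_zero
  push_cast
  field_simp
  ring

def rhsTerm (m k : ℕ) : ℚ := trinom k * trinom (m - k)

def rhsCert (m k : ℕ) : ℚ :=
  k ^ 2 * (-432 + 2196 * k - 3078 * k ^ 2 + 1134 * k ^ 3
    + m * (-2484 + 7614 * k - 5427 * k ^ 2 + 729 * k ^ 3)
    + m ^ 2 * (-4536 + 7452 * k - 2187 * k ^ 2) + m ^ 3 * (-3159 + 2187 * k) - 729 * m ^ 4)
    * trinom k * trinom (m - k) / (((m + 1 - k) * (m + 2 - k)) ^ 2 : ℕ)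

theorem rhsTerm_telescoping {m k : ℕ} (hk : k < m) :
    p₀ m * rhsTerm m k + p₁ m * rhsTerm (m + 1) k + p₂ m * rhsTerm (m + 2) k
      = rhsCert m (k + 1) - rhsCert m k := by
  obtain ⟨j, rfl⟩ : ∃ j, m = k + (j + 1) := ⟨m - k - 1, by omega⟩
  simp only [p₀, p₁, p₂, rhsTerm, rhsCert, add_assoc, add_tsub_cancel_left,
    Nat.add_sub_add_left, Nat.reduceAdd, Nat.reduceSubDiff, trinom_succ]
  push_cast
  field_simp
  ring

theorem rhsTerm_tail (m : ℕ) :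
    p₀ m * rhsTerm m m + p₁ m * (rhsTerm (m + 1) m + rhsTerm (m + 1) (m + 1))
      + p₂ m * (rhsTerm (m + 2) m + rhsTerm (m + 2) (m + 1) + rhsTerm (m + 2) (m + 2))
      = -rhsCert m m := by
  simp only [p₀, p₁, p₂, rhsTerm, rhsCert, add_tsub_cancel_left, Nat.sub_self,
    Nat.add_sub_add_left, Nat.reduceSubDiff, trinom_succ, trinom_zero]
  have : (m + 1 : ℚ) ≠ 0 := m.cast_add_one_ne_zero
  push_cast
  field_simp
  ring

def lhsSum (m : ℕ) : ℚ := ∑ k ∈ range (m + 1), lhsTerm m k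

def rhsSum (m : ℕ) : ℚ := ∑ k ∈ range (m + 1), rhsTerm m k

theorem lhsSum_recurrence (m : ℕ) :
    p₀ m * lhsSum m + p₁ m * lhsSum (m + 1) + p₂ m * lhsSum (m + 2) = 0 :=
  recurrence_of_telescoping _ _ _ _ _ m (fun _ hk => lhsTerm_telescoping hk)
    (by simp [lhsCert]) (lhsTerm_tail m)

theorem rhsSum_recurrence (m : ℕ) :
    p₀ m * rhsSum m + p₁ m * rhsSum (m + 1) + p₂ m * rhsSum (m + 2) = 0 :=
  recurrence_of_telescoping _ _ _ _ _ m (fun _ hk => rhsTerm_telescoping hk)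
    (by simp [rhsCert]) (rhsTerm_tail m)

theorem lhsSum_eq_rhsSum : lhsSum = rhsSum :=
  eq_of_recurrence (fun n => neg_ne_zero.mpr (by positivity)) lhsSum_recurrence rhsSum_recurrence
    (by simp [lhsSum, rhsSum, lhsTerm, rhsTerm, centralBinomTrinom, trinom_zero])
    (by norm_num [lhsSum, rhsSum, sum_range_succ, lhsTerm, rhsTerm, centralBinomTrinom, trinom])

end TrinomialSums

theorem stmt_0 (m : ℕ) :
    ∑ k ∈ Finset.range (m + 1),
      ((Nat.choose (2 * k) k : ℤ) ^ 2 * Nat.choose (3 * k) k *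
        Nat.choose k (m - k) * (-27) ^ (m - k))
    = ∑ k ∈ Finset.range (m + 1),
      ((Nat.choose (2 * k) k : ℤ) * Nat.choose (3 * k) k *
        Nat.choose (2 * (m - k)) (m - k) * Nat.choose (3 * (m - k)) (m - k)) := by
  have h := congrFun TrinomialSums.lhsSum_eq_rhsSum m
  simp only [TrinomialSums.lhsSum, TrinomialSums.rhsSum, TrinomialSums.lhsTerm,
    TrinomialSums.rhsTerm, TrinomialSums.centralBinomTrinom, TrinomialSums.trinom, ← mul_assoc] at h
  exact_mod_cast h
end

section
/- For every nonnegative integer m, the sum over k from 0 to m of C(2k,k)^2 * C(4k,2k) * C(k, m-k) * (-64)^(m-k) equals the sum over k from 0 to m of C(2k,k) * C(4k,2k) * C(2(m-k), m-k) * C(4(m-k), 2(m-k)). -/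
/-!
Both sides, as sequences in `m`, satisfy the second-order recurrence
`c₀(m) u(m) + c₁(m) u(m+1) + c₂(m) u(m+2) = 0` with `c₂(m) = (m+2)³ ≠ 0`, and they agree for
`m = 0, 1`. Each recurrence is proved by creative telescoping: for every summation index `k`
the recurrence applied to the summand is `G(k+1) - G(k)` for an explicit hypergeometric
certificate `G` (as found by Zeilberger's algorithm), so the sum telescopes.
-/

open Finset

theorem Nat.cast_choose_succ_right_s1 {R : Type*} [CommRing R] (n k : ℕ) :
    ((k : R) + 1) * n.choose (k + 1) = ((n : R) - k) * n.choose k := by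
  rcases le_or_gt k n with hkn | hnk
  · have h := congrArg (Nat.cast : ℕ → R) (Nat.choose_succ_right_eq n k)
    push_cast [Nat.cast_sub hkn] at h
    linear_combination h
  · rw [Nat.choose_eq_zero_of_lt hnk, Nat.choose_eq_zero_of_lt (by omega)]
    simp

theorem Nat.cast_choose_succ_left {R : Type*} [CommRing R] (n k : ℕ) :
    ((n : R) + 1 - k) * (n + 1).choose k = ((n : R) + 1) * n.choose k := by
  rcases le_or_gt k (n + 1) with hkn | hnk
  · have h := congrArg (Nat.cast : ℕ → R) (Nat.choose_mul_succ_eq n k)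
    push_cast [Nat.cast_sub hkn] at h
    linear_combination -h
  · rw [Nat.choose_eq_zero_of_lt hnk, Nat.choose_eq_zero_of_lt (by omega)]
    simp

theorem Nat.cast_succ_mul_centralBinom_succ {R : Type*} [CommSemiring R] (n : ℕ) :
    ((n : R) + 1) * (n + 1).centralBinom = 2 * (2 * n + 1) * n.centralBinom := by
  have h := congrArg (Nat.cast : ℕ → R) (Nat.succ_mul_centralBinom_succ n)
  push_cast at h
  exact h

theorem Finset.sum_range_recurrence_of_telescoping {R : Type*} [CommRing R] {F : ℕ → ℕ → R}
    (G : ℕ → R) (c₀ c₁ c₂ : R) (m : ℕ) (hF : ∀ n k, n < k → F n k = 0)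
    (hcert : ∀ k, c₀ * F m k + c₁ * F (m + 1) k + c₂ * F (m + 2) k = G (k + 1) - G k)
    (hG₀ : G 0 = 0) (hG : G (m + 3) = 0) :
    c₀ * ∑ k ∈ range (m + 1), F m k + c₁ * ∑ k ∈ range (m + 2), F (m + 1) k
      + c₂ * ∑ k ∈ range (m + 3), F (m + 2) k = 0 := by
  have extend : ∀ n, n + 1 ≤ m + 3 → ∑ k ∈ range (n + 1), F n k = ∑ k ∈ range (m + 3), F n k :=
    fun n hn ↦ sum_subset (range_subset_range.2 hn) fun k _ hk ↦ hF n k (by simpa using hk)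
  rw [extend m (by omega), extend (m + 1) (by omega), mul_sum, mul_sum, mul_sum,
    ← sum_add_distrib, ← sum_add_distrib, sum_congr rfl fun k _ ↦ hcert k, sum_range_sub, hG, hG₀,
    sub_zero]

theorem eq_of_linear_recurrence {R : Type*} [CommRing R] [IsDomain R] {u v : ℕ → R}
    (c₀ c₁ c₂ : ℕ → R) (hc₂ : ∀ m, c₂ m ≠ 0)
    (hu : ∀ m, c₀ m * u m + c₁ m * u (m + 1) + c₂ m * u (m + 2) = 0)
    (hv : ∀ m, c₀ m * v m + c₁ m * v (m + 1) + c₂ m * v (m + 2) = 0)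
    (h₀ : u 0 = v 0) (h₁ : u 1 = v 1) : u = v := by
  funext m
  induction m using Nat.twoStepInduction with
  | zero => exact h₀
  | one => exact h₁
  | more m ih₀ ih₁ =>
    have h : c₂ m * (u (m + 2) - v (m + 2)) = 0 := by
      linear_combination hu m - hv m - c₀ m * ih₀ - c₁ m * ih₁
    exact sub_eq_zero.1 ((mul_eq_zero.1 h).resolve_left (hc₂ m))

namespace BinomConv

/- `b n = C(2n,n) C(4n,2n)` and `w k j = C(k,j) (-64)^j`, extended by zero to negative
indices: then their recurrences below hold for every integer index, and so do the
certificate identities, with no boundary cases at the ends of the summation range. -/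

def b : ℤ → ℚ
  | (n : ℕ) => Nat.centralBinom n * Nat.centralBinom (2 * n)
  | Int.negSucc _ => 0

def a (n : ℕ) : ℚ := Nat.centralBinom n * b n

def w (k : ℕ) : ℤ → ℚ
  | (j : ℕ) => k.choose j * (-64) ^ j
  | Int.negSucc _ => 0

theorem b_natCast (n : ℕ) : b n = Nat.centralBinom n * Nat.centralBinom (2 * n) := rfl

theorem w_natCast (k n : ℕ) : w k n = k.choose n * (-64) ^ n := rfl

theorem b_eq_zero_of_neg {n : ℤ} (hn : n < 0) : b n = 0 := by
  obtain ⟨l, rfl⟩ : ∃ l : ℕ, n = Int.negSucc l := ⟨n.natAbs - 1, by omega⟩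
  rfl

theorem w_eq_zero_of_neg (k : ℕ) {j : ℤ} (hj : j < 0) : w k j = 0 := by
  obtain ⟨l, rfl⟩ : ∃ l : ℕ, j = Int.negSucc l := ⟨j.natAbs - 1, by omega⟩
  rfl

theorem b_succ (n : ℤ) : (n + 1) ^ 2 * b (n + 1) = 4 * (4 * n + 1) * (4 * n + 3) * b n := by
  rcases n with n | _ | n
  · have h₁ := Nat.cast_succ_mul_centralBinom_succ (R := ℚ) n
    have h₂ := Nat.cast_succ_mul_centralBinom_succ (R := ℚ) (2 * n)
    have h₃ := Nat.cast_succ_mul_centralBinom_succ (R := ℚ) (2 * n + 1)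
    rw [Int.ofNat_eq_natCast, show (n : ℤ) + 1 = ((n + 1 : ℕ) : ℤ) by push_cast; rfl,
      b_natCast, b_natCast, show 2 * (n + 1) = 2 * n + 1 + 1 by ring]
    push_cast at h₁ h₂ h₃ ⊢
    linear_combination ((n : ℚ) + 1) * Nat.centralBinom (2 * n + 1 + 1) * h₁
      + (2 * (n : ℚ) + 1) * Nat.centralBinom n * h₃
      + 2 * (4 * (n : ℚ) + 3) * Nat.centralBinom n * h₂
  · simp [b]
  · rw [show Int.negSucc (n + 1) + 1 = Int.negSucc n from rfl]
    simp [b]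

theorem a_succ (n : ℕ) :
    ((n : ℚ) + 1) ^ 3 * a (n + 1) = 8 * (2 * n + 1) * (4 * n + 1) * (4 * n + 3) * a n := by
  have h₁ := Nat.cast_succ_mul_centralBinom_succ (R := ℚ) n
  have h₂ := b_succ n
  push_cast [a] at h₂ ⊢
  linear_combination ((n : ℚ) + 1) ^ 2 * b ((n : ℤ) + 1) * h₁
    + 2 * (2 * (n : ℚ) + 1) * Nat.centralBinom n * h₂

theorem w_succ_right (k : ℕ) (j : ℤ) : (j + 1) * w k (j + 1) = -64 * (k - j) * w k j := by
  rcases j with n | _ | n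
  · rw [Int.ofNat_eq_natCast, show (n : ℤ) + 1 = ((n + 1 : ℕ) : ℤ) by push_cast; rfl,
      w_natCast, w_natCast]
    have h := Nat.cast_choose_succ_right_s1 (R := ℚ) k n
    push_cast
    linear_combination (-64 : ℚ) ^ (n + 1) * h
  · simp [w]
  · rw [show Int.negSucc (n + 1) + 1 = Int.negSucc n from rfl]
    simp [w]

theorem w_succ_succ (k : ℕ) (j : ℤ) : w (k + 1) (j + 1) = w k (j + 1) - 64 * w k j := by
  rcases j with n | _ | n
  · rw [Int.ofNat_eq_natCast, show (n : ℤ) + 1 = ((n + 1 : ℕ) : ℤ) by push_cast; rfl,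
      w_natCast, w_natCast, w_natCast, Nat.choose_succ_succ']
    push_cast
    ring
  · simp [w]
  · rw [show Int.negSucc (n + 1) + 1 = Int.negSucc n from rfl]
    simp [w]

theorem w_succ_left (k : ℕ) (j : ℤ) : ((k : ℚ) + 1 - j) * w (k + 1) j = (k + 1) * w k j := by
  rcases j with n | n
  · rw [Int.ofNat_eq_natCast, w_natCast, w_natCast]
    have h := Nat.cast_choose_succ_left (R := ℚ) k n
    push_cast
    linear_combination (-64 : ℚ) ^ n * h
  · simp [w]

def c₀ (x : ℚ) : ℚ := 1024 * (x + 1) * (2 * x + 1) * (2 * x + 3)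

def c₁ (x : ℚ) : ℚ := -8 * (2 * x + 3) * (8 * x ^ 2 + 24 * x + 19)

def c₂ (x : ℚ) : ℚ := (x + 2) ^ 3

def bCert (m i : ℤ) : ℚ :=
  64 * i ^ 2 * (3 * m - 2 * i + 4) * b i * b (m + 1 - i)
    + i ^ 2 * (2 * i - 3 * m - 6) * b i * b (m + 2 - i)

def aCert (m : ℤ) (k : ℕ) : ℚ :=
  64 * k ^ 2 * (2 * k - m - 1) * a k * w k (m + 1 - k) - k ^ 3 * a k * w k (m + 2 - k)

theorem b_cert (m i : ℤ) :
    c₀ m * (b i * b (m - i)) + c₁ m * (b i * b (m + 1 - i)) + c₂ m * (b i * b (m + 2 - i))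
      = bCert m (i + 1) - bCert m i := by
  obtain ⟨j, rfl⟩ : ∃ j, m = i + j := ⟨m - i, by ring⟩
  have hi := b_succ i
  have hj := b_succ j
  have hj' := b_succ (j + 1)
  rw [show j + 1 + 1 = j + 2 by ring] at hj'
  simp only [bCert, c₀, c₁, c₂, show i + j - i = j by ring, show i + j + 1 - i = j + 1 by ring,
    show i + j + 2 - i = j + 2 by ring, show i + j + 1 - (i + 1) = j by ring,
    show i + j + 2 - (i + 1) = j + 1 by ring]
  push_cast at hi hj hj' ⊢
  linear_combination
    -(64 * (i + 3 * j + 2 : ℚ) * b j - (i + 3 * j + 4 : ℚ) * b (j + 1)) * hi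
      + b i * (-64 * (3 * i + j + 2 : ℚ) * hj + (3 * i + j + 2 : ℚ) * hj')

theorem a_cert (m : ℤ) (k : ℕ) :
    c₀ m * (a k * w k (m - k)) + c₁ m * (a k * w k (m + 1 - k))
        + c₂ m * (a k * w k (m + 2 - k))
      = aCert m (k + 1) - aCert m k := by
  obtain ⟨j, rfl⟩ : ∃ j, m = k + j := ⟨m - k, by ring⟩
  have ha := a_succ k
  have hw₁ := w_succ_right k j
  have hw₁' := w_succ_right k (j + 1)
  have hw₂ := w_succ_succ k j
  have hw₃ := w_succ_left k j
  rw [show j + 1 + 1 = j + 2 by ring] at hw₁'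
  simp only [aCert, c₀, c₁, c₂, Nat.cast_add, Nat.cast_one, show (k : ℤ) + j - k = j by ring,
    show (k : ℤ) + j + 1 - k = j + 1 by ring, show (k : ℤ) + j + 2 - k = j + 2 by ring,
    show (k : ℤ) + j + 1 - (k + 1) = j by ring, show (k : ℤ) + j + 2 - (k + 1) = j + 1 by ring]
  push_cast at ha hw₁ hw₁' hw₂ hw₃ ⊢
  -- After eliminating `a (k+1)` and `w (k+1) ·`, what is left is `a k` times a combination of
  -- `w k j, w k (j+1), w k (j+2)`; the coefficients of `hw₁, hw₁'` are its `w k j` coefficient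
  -- divided by `64 (k - j)` and its `w k (j+2)` coefficient divided by `j + 2`.
  linear_combination
    -64 * ((k : ℚ) + 1) ^ 2 * a (k + 1) * hw₃ + (w (k + 1) (j + 1) - 64 * w k j) * ha
      + 8 * (2 * (k : ℚ) + 1) * (4 * k + 1) * (4 * k + 3) * a k * hw₂
      + a k * ((-448 * k ^ 2 - 256 * k * j - 576 * k - 64 * j ^ 2 - 192 * j - 176 : ℚ) * hw₁
        + (3 * k ^ 2 + 3 * k * j + 6 * k + j ^ 2 + 4 * j + 4 : ℚ) * hw₁')

def aSum (m : ℕ) : ℚ := ∑ k ∈ range (m + 1), a k * w k (m - k)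

def bConv (m : ℕ) : ℚ := ∑ k ∈ range (m + 1), b k * b (m - k)

theorem aSum_recurrence (m : ℕ) :
    c₀ m * aSum m + c₁ m * aSum (m + 1) + c₂ m * aSum (m + 2) = 0 := by
  refine sum_range_recurrence_of_telescoping (F := fun n k ↦ a k * w k (n - k))
    (fun k ↦ aCert m k) _ _ _ m (fun n k hnk ↦ ?_) (fun k ↦ ?_) (by simp [aCert]) ?_
  · simp [w_eq_zero_of_neg k (show (n : ℤ) - k < 0 by omega)]
  · have h := a_cert m k
    push_cast at h ⊢
    linear_combination h
  · simp [aCert, w_eq_zero_of_neg]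

theorem bConv_recurrence (m : ℕ) :
    c₀ m * bConv m + c₁ m * bConv (m + 1) + c₂ m * bConv (m + 2) = 0 := by
  refine sum_range_recurrence_of_telescoping (F := fun n k ↦ b k * b (n - k))
    (fun k ↦ bCert m k) _ _ _ m (fun n k hnk ↦ ?_) (fun k ↦ ?_) (by simp [bCert]) ?_
  · simp [b_eq_zero_of_neg (show (n : ℤ) - k < 0 by omega)]
  · have h := b_cert m k
    push_cast at h ⊢
    linear_combination h
  · simp [bCert, b_eq_zero_of_neg]

theorem aSum_eq_bConv : aSum = bConv :=
  eq_of_linear_recurrence (fun m ↦ c₀ m) (fun m ↦ c₁ m) (fun m ↦ c₂ m)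
    (fun m ↦ by simp only [c₂]; positivity) aSum_recurrence bConv_recurrence
    (by simp [aSum, bConv, a, b, w])
    (by simp [aSum, bConv, a, b, w, sum_range_succ, show Nat.centralBinom 1 = 2 from rfl]; ring)

theorem aSum_eq (m : ℕ) : aSum m = ∑ k ∈ range (m + 1),
    ((Nat.choose (2 * k) k : ℚ) ^ 2 * Nat.choose (4 * k) (2 * k) *
      Nat.choose k (m - k) * (-64) ^ (m - k)) := by
  refine sum_congr rfl fun k hk ↦ ?_
  rw [← Nat.cast_sub (by simpa [Nat.lt_succ_iff] using hk), a, b_natCast, w_natCast,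
    Nat.centralBinom_eq_two_mul_choose, Nat.centralBinom_eq_two_mul_choose,
    show 2 * (2 * k) = 4 * k by ring]
  ring

theorem bConv_eq (m : ℕ) : bConv m = ∑ k ∈ range (m + 1),
    ((Nat.choose (2 * k) k : ℚ) * Nat.choose (4 * k) (2 * k) *
      Nat.choose (2 * (m - k)) (m - k) * Nat.choose (4 * (m - k)) (2 * (m - k))) := by
  refine sum_congr rfl fun k hk ↦ ?_
  rw [← Nat.cast_sub (by simpa [Nat.lt_succ_iff] using hk), b_natCast, b_natCast]
  simp only [Nat.centralBinom_eq_two_mul_choose, ← mul_assoc,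
    show ∀ n, 2 * (2 * n) = 4 * n by intro n; ring]

end BinomConv

theorem stmt_1 (m : ℕ) :
    ∑ k ∈ Finset.range (m + 1),
      ((Nat.choose (2 * k) k : ℤ) ^ 2 * Nat.choose (4 * k) (2 * k) *
        Nat.choose k (m - k) * (-64) ^ (m - k))
    = ∑ k ∈ Finset.range (m + 1),
      ((Nat.choose (2 * k) k : ℤ) * Nat.choose (4 * k) (2 * k) *
        Nat.choose (2 * (m - k)) (m - k) * Nat.choose (4 * (m - k)) (2 * (m - k))) := by
  refine Int.cast_injective (α := ℚ) ?_
  push_cast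
  rw [← BinomConv.aSum_eq, ← BinomConv.bConv_eq, BinomConv.aSum_eq_bConv]
end

section
/- For every nonnegative integer m, the sum over k from 0 to m of C(2k,k) * C(3k,k) * C(6k,3k) * C(k, m-k) * (-432)^(m-k) equals the sum over k from 0 to m of C(3k,k) * C(6k,3k) * C(3(m-k), m-k) * C(6(m-k), 3(m-k)). -/
/-!
Both sides are diagonal sums `∑_{i+j=m} t i j` of hypergeometric terms: `t i j = a i a j` on the
right, with `a n = C(3n,n) C(6n,3n)`, and `t i j = b i C(i,j) (-432)^j` on the left, with
`b n = C(2n,n) a n`. Creative telescoping shows that both sums satisfy the same second-order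
recurrence `c₀ m S m + c₁ m S (m+1) + c₂ m S (m+2) = 0`, whose leading coefficient
`c₂ m = -(m+2)³` never vanishes, and both sums equal `1` at `m = 0` and `120` at `m = 1`.
-/

open Finset Nat

section CommRing

variable {R : Type*} [CommRing R]

theorem cast_choose_succ_right_mul (n k : ℕ) :
    (n.choose (k + 1) : R) * (k + 1) = n.choose k * ((n : R) - k) := by
  rcases le_or_gt k n with h | h
  · have := congrArg (Nat.cast (R := R)) (choose_succ_right_eq n k)
    push_cast [Nat.cast_sub h] at this
    exact this
  · rw [choose_eq_zero_of_lt h, choose_eq_zero_of_lt (by omega)]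
    simp

def diagSum (t : ℕ → ℕ → R) (m : ℕ) : R := ∑ p ∈ antidiagonal m, t p.1 p.2

theorem diagSum_succ (t : ℕ → ℕ → R) (m : ℕ) :
    diagSum t (m + 1) = t (m + 1) 0 + ∑ p ∈ antidiagonal m, t p.1 (p.2 + 1) :=
  Nat.sum_antidiagonal_succ'

theorem sum_antidiagonal_sub (d : ℕ → ℕ → R) (m : ℕ) :
    ∑ p ∈ antidiagonal m, (d (p.1 + 1) p.2 - d p.1 (p.2 + 1)) = d (m + 1) 0 - d 0 (m + 1) := by
  have h₁ : ∑ p ∈ antidiagonal (m + 1), d p.1 p.2 =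
      d 0 (m + 1) + ∑ p ∈ antidiagonal m, d (p.1 + 1) p.2 := Nat.sum_antidiagonal_succ
  have h₂ : ∑ p ∈ antidiagonal (m + 1), d p.1 p.2 =
      d (m + 1) 0 + ∑ p ∈ antidiagonal m, d p.1 (p.2 + 1) := Nat.sum_antidiagonal_succ'
  rw [sum_sub_distrib]
  linear_combination h₂ - h₁

/-- Creative telescoping: a certificate `d` for a recurrence of the terms `t i j` in `j` gives the
same recurrence for the diagonal sums of `t`, up to boundary terms. -/
theorem diagSum_recurrence (c₀ c₁ c₂ : ℕ → R) (t d : ℕ → ℕ → R)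
    (hcert : ∀ i j, c₀ (i + j) * t i j + c₁ (i + j) * t i (j + 1) + c₂ (i + j) * t i (j + 2)
      = d (i + 1) j - d i (j + 1)) (m : ℕ) :
    c₀ m * diagSum t m + c₁ m * diagSum t (m + 1) + c₂ m * diagSum t (m + 2)
      = d (m + 1) 0 - d 0 (m + 1) + c₁ m * t (m + 1) 0
        + c₂ m * (t (m + 2) 0 + t (m + 1) 1) := by
  have hsum : ∑ p ∈ antidiagonal m,
      (c₀ m * t p.1 p.2 + c₁ m * t p.1 (p.2 + 1) + c₂ m * t p.1 (p.2 + 2))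
        = d (m + 1) 0 - d 0 (m + 1) := by
    rw [← sum_antidiagonal_sub]
    refine sum_congr rfl fun p hp => ?_
    rw [← HasAntidiagonal.mem_antidiagonal.mp hp]
    exact hcert p.1 p.2
  rw [sum_add_distrib, sum_add_distrib, ← mul_sum, ← mul_sum, ← mul_sum] at hsum
  rw [diagSum_succ, diagSum_succ, Nat.sum_antidiagonal_succ']
  unfold diagSum
  linear_combination hsum

end CommRing

theorem eq_of_three_term_recurrence {R : Type*} [CommRing R] [IsDomain R] {u v : ℕ → R}
    (c₀ c₁ c₂ : ℕ → R) (hc₂ : ∀ n, c₂ n ≠ 0)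
    (hu : ∀ n, c₀ n * u n + c₁ n * u (n + 1) + c₂ n * u (n + 2) = 0)
    (hv : ∀ n, c₀ n * v n + c₁ n * v (n + 1) + c₂ n * v (n + 2) = 0)
    (h₀ : u 0 = v 0) (h₁ : u 1 = v 1) : u = v := by
  funext n
  induction n using Nat.twoStepInduction with
  | zero => exact h₀
  | one => exact h₁
  | more n ih₀ ih₁ =>
    refine mul_left_cancel₀ (hc₂ n) ?_
    linear_combination hu n - hv n - c₀ n * ih₀ - c₁ n * ih₁

namespace BinomialSum432

def a (n : ℕ) : ℚ := (3 * n).choose n * (6 * n).choose (3 * n)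

def b (n : ℕ) : ℚ := (2 * n).choose n * a n

theorem a_eq_factorial (n : ℕ) : a n = (6 * n)! / ((3 * n)! * (2 * n)! * n !) := by
  rw [a, cast_choose ℚ (by omega : n ≤ 3 * n), cast_choose ℚ (by omega : 3 * n ≤ 6 * n),
    show 3 * n - n = 2 * n by omega, show 6 * n - 3 * n = 3 * n by omega]
  field_simp

theorem a_succ (n : ℕ) :
    ((n : ℚ) + 1) ^ 2 * a (n + 1) = 12 * (6 * n + 1) * (6 * n + 5) * a n := by
  rw [a_eq_factorial, a_eq_factorial, show 6 * (n + 1) = 6 * n + 6 by ring,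
    show 3 * (n + 1) = 3 * n + 3 by ring, show 2 * (n + 1) = 2 * n + 2 by ring]
  simp only [factorial_succ, cast_mul, cast_add, cast_ofNat, cast_one]
  field_simp
  ring

theorem b_succ (n : ℕ) :
    ((n : ℚ) + 1) ^ 3 * b (n + 1) = 8 * (6 * n + 1) * (6 * n + 3) * (6 * n + 5) * b n := by
  have hc :
      ((n : ℚ) + 1) * (2 * (n + 1)).choose (n + 1) = 2 * (2 * n + 1) * (2 * n).choose n := by
    simpa [← centralBinom_eq_two_mul_choose] using
      congrArg (Nat.cast (R := ℚ)) (succ_mul_centralBinom_succ n)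
  rw [b, b]
  linear_combination
    ((n : ℚ) + 1) ^ 2 * a (n + 1) * hc + 2 * (2 * n + 1) * (2 * n).choose n * a_succ n

/- `c₀, c₁, c₂` is the recurrence that Zeilberger's algorithm produces for both sides, and
`lhsCert`, `rhsCert` are the corresponding telescoping certificates. -/

def c₀ (m : ℕ) : ℚ := -20736 * (m + 1) * (3 * m + 1) * (3 * m + 5)

def c₁ (m : ℕ) : ℚ := 24 * (2 * m + 3) * (18 * m ^ 2 + 54 * m + 41)

def c₂ (m : ℕ) : ℚ := -(m + 2) ^ 3

def lhsTerm (i j : ℕ) : ℚ := b i * i.choose j * (-432) ^ j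

def lhsCert (i j : ℕ) : ℚ := (i + j + 1) * i ^ 2 * lhsTerm i (j + 1)

def rhsTerm (i j : ℕ) : ℚ := a i * a j

def rhsCert (i j : ℕ) : ℚ :=
  -12 * i ^ 2 * (36 * j ^ 2 + 36 * i * j + 57 * j + 31 * i + 21) * a i * a j / (j + 1) ^ 2

theorem lhsTerm_cert (i j : ℕ) :
    c₀ (i + j) * lhsTerm i j + c₁ (i + j) * lhsTerm i (j + 1) + c₂ (i + j) * lhsTerm i (j + 2)
      = lhsCert (i + 1) j - lhsCert i (j + 1) := by
  have hj₁ : (j : ℚ) + 1 ≠ 0 := by positivity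
  have hj₂ : (j : ℚ) + 2 ≠ 0 := by positivity
  have h₁ : (i.choose (j + 1) : ℚ) = i.choose j * (i - j) / (j + 1) := by
    rw [eq_div_iff hj₁, cast_choose_succ_right_mul]
  have h₂ : (i.choose (j + 2) : ℚ) = i.choose (j + 1) * (i - j - 1) / (j + 2) := by
    rw [eq_div_iff hj₂]
    have := cast_choose_succ_right_mul (R := ℚ) i (j + 1)
    push_cast at this
    linear_combination this
  have h₃ : ((i + 1).choose (j + 1) : ℚ) = i.choose j * (i + 1) / (j + 1) := by
    rw [eq_div_iff hj₁, mul_comm _ ((i : ℚ) + 1)]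
    exact_mod_cast (add_one_mul_choose_eq i j).symm
  have hb : b (i + 1) = 8 * (6 * i + 1) * (6 * i + 3) * (6 * i + 5) * b i / (i + 1) ^ 3 := by
    rw [eq_div_iff (by positivity), ← b_succ]
    ring
  simp only [lhsCert, lhsTerm, c₀, c₁, c₂]
  rw [h₂, h₁, h₃, hb]
  push_cast
  field_simp
  ring

theorem rhsTerm_cert (i j : ℕ) :
    c₀ (i + j) * rhsTerm i j + c₁ (i + j) * rhsTerm i (j + 1) + c₂ (i + j) * rhsTerm i (j + 2)
      = rhsCert (i + 1) j - rhsCert i (j + 1) := by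
  have ha (n : ℕ) : a (n + 1) = 12 * (6 * n + 1) * (6 * n + 5) * a n / (n + 1) ^ 2 := by
    rw [eq_div_iff (by positivity), ← a_succ]
    ring
  simp only [rhsCert, rhsTerm, c₀, c₁, c₂]
  rw [ha (j + 1), ha j, ha i]
  push_cast
  field_simp
  ring

theorem diagSum_lhsTerm_recurrence (m : ℕ) :
    c₀ m * diagSum lhsTerm m + c₁ m * diagSum lhsTerm (m + 1) + c₂ m * diagSum lhsTerm (m + 2)
      = 0 := by
  rw [diagSum_recurrence c₀ c₁ c₂ lhsTerm lhsCert lhsTerm_cert]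
  have hb := b_succ (m + 1)
  simp only [lhsCert, lhsTerm, c₁, c₂, zero_add, choose_zero_right, choose_one_right]
  push_cast at hb ⊢
  linear_combination -hb

theorem diagSum_rhsTerm_recurrence (m : ℕ) :
    c₀ m * diagSum rhsTerm m + c₁ m * diagSum rhsTerm (m + 1) + c₂ m * diagSum rhsTerm (m + 2)
      = 0 := by
  rw [diagSum_recurrence c₀ c₁ c₂ rhsTerm rhsCert rhsTerm_cert]
  have ha := a_succ (m + 1)
  have ha₀ : a 0 = 1 := by simp [a]
  have ha₁ : a 1 = 60 := by norm_num [a, Nat.choose]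
  simp only [rhsCert, rhsTerm, c₁, c₂, ha₀, ha₁]
  push_cast at ha ⊢
  linear_combination (-((m : ℚ) + 2)) * ha

theorem diagSum_lhsTerm_eq_diagSum_rhsTerm : diagSum lhsTerm = diagSum rhsTerm := by
  refine eq_of_three_term_recurrence c₀ c₁ c₂ (fun n => ?_) diagSum_lhsTerm_recurrence
    diagSum_rhsTerm_recurrence ?_ ?_
  · exact neg_ne_zero.mpr (by positivity)
  · simp [diagSum, lhsTerm, rhsTerm, b, a]
  · norm_num [diagSum, lhsTerm, rhsTerm, b, a, Nat.sum_antidiagonal_succ, Nat.choose]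

end BinomialSum432

theorem stmt_2 (m : ℕ) :
    ∑ k ∈ Finset.range (m + 1),
      ((Nat.choose (2 * k) k : ℤ) * Nat.choose (3 * k) k * Nat.choose (6 * k) (3 * k) *
        Nat.choose k (m - k) * (-432) ^ (m - k))
    = ∑ k ∈ Finset.range (m + 1),
      ((Nat.choose (3 * k) k : ℤ) * Nat.choose (6 * k) (3 * k) *
        Nat.choose (3 * (m - k)) (m - k) * Nat.choose (6 * (m - k)) (3 * (m - k))) := by
  have key := congrFun BinomialSum432.diagSum_lhsTerm_eq_diagSum_rhsTerm m
  rw [diagSum, diagSum, Nat.sum_antidiagonal_eq_sum_range_succ BinomialSum432.lhsTerm,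
    Nat.sum_antidiagonal_eq_sum_range_succ BinomialSum432.rhsTerm] at key
  apply @Int.cast_injective ℚ
  push_cast
  convert key using 2 with k <;>
    simp only [BinomialSum432.lhsTerm, BinomialSum432.rhsTerm, BinomialSum432.b,
      BinomialSum432.a] <;> ring
end

section
/- Let p be an odd prime and let k be an integer with p/3 < k < p. Then p divides C(2k,k) * C(3k,k). -/
theorem stmt_6 (p : ℕ) (hp : p.Prime) (hodd : Odd p) (k : ℕ)
    (h1 : p < 3 * k) (h2 : k < p) :
    p ∣ Nat.choose (2 * k) k * Nat.choose (3 * k) k := by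
  rcases le_or_gt p (2 * k) with h | h
  · exact Dvd.dvd.mul_right (hp.dvd_choose h2 (by omega) h) _
  · exact Dvd.dvd.mul_left (hp.dvd_choose h2 (by omega) (by omega)) _
end

section
/- Let p be an odd prime and let k be an integer with 2p/3 <= k <= p-1. Then p^2 divides C(2k,k) * C(3k,k). -/
theorem stmt_7 (p : ℕ) (hp : p.Prime) (hodd : Odd p) (k : ℕ)
    (h1 : 2 * p ≤ 3 * k) (h2 : k ≤ p - 1) :
    p ^ 2 ∣ Nat.choose (2 * k) k * Nat.choose (3 * k) k := by
  have hp2 : p ≠ 2 := by rintro rfl; exact (Nat.not_odd_iff_even.mpr (by decide)) hodd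
  have hp3 : 3 ≤ p := by
    rcases hp.two_le.lt_or_eq with h | h
    · omega
    · exact absurd h.symm hp2
  have hkp : k < p := by omega
  have hp2k : p < 2 * k := by omega
  have d1 : p ∣ Nat.choose (2 * k) k := by
    have := Nat.Prime.dvd_choose_add hp hkp hkp (by omega)
    simpa [two_mul] using this
  have d2 : p ∣ Nat.choose (3 * k) k := by
    have h3k : 3 * k < p ^ 2 := by nlinarith
    have hlog : Nat.log p (3 * k) < 2 := Nat.log_lt_of_lt_pow (by omega) h3k
    have hm := Nat.Prime.emultiplicity_choose hp (show k ≤ 3 * k by omega) hlog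
    have hk : k % p = k := Nat.mod_eq_of_lt hkp
    have h2k : (2 * k) % p = 2 * k - p := by
      rw [Nat.mod_eq_sub_mod (le_of_lt hp2k), Nat.mod_eq_of_lt (by omega)]
    have hcard : (Finset.filter (fun i => p ^ i ≤ k % p ^ i + (3 * k - k) % p ^ i) (Finset.Ico 1 2)).card = 1 := by
      have h3 : 3 * k - k = 2 * k := by omega
      rw [h3, show Finset.Ico 1 2 = {1} from rfl, Finset.filter_singleton, if_pos]
      · rfl
      · simp only [pow_one, hk, h2k]; omega
    have hpow : p ^ 1 ∣ Nat.choose (3 * k) k := by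
      apply pow_dvd_of_le_emultiplicity
      rw [hm, hcard]
    simpa using hpow
  rw [sq]
  exact mul_dvd_mul d1 d2
end

section
/- Let p be an odd prime and let k be an integer with 3p/4 <= k <= p-1. Then p^2 divides C(2k,k) * C(4k,2k). -/
open Nat Finset in
theorem stmt_8 (p : ℕ) (hp : p.Prime) (hodd : Odd p) (k : ℕ)
    (h1 : 3 * p ≤ 4 * k) (h2 : k ≤ p - 1) :
    p ^ 2 ∣ Nat.choose (2 * k) k * Nat.choose (4 * k) (2 * k) := by
  have hp1 : 1 ≤ p := hp.one_lt.le
  have hkp : k < p := lt_of_le_of_lt h2 (Nat.sub_lt hp.pos one_pos)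
  have hp2 : p ≠ 2 := by rintro rfl; exact (by decide : ¬ Odd 2) hodd
  have hp3 : 3 ≤ p := by have := hp.two_le; omega
  have hk1 : 1 ≤ k := by omega
  have hple2k : p ≤ 2 * k := by omega
  -- first factor
  have d1 : p ∣ Nat.choose (2 * k) k := by
    have := hp.dvd_choose (a := k) (b := 2 * k) hkp (by omega) hple2k
    exact this
  -- second factor via Kummer
  have d2 : p ∣ Nat.choose (4 * k) (2 * k) := by
    have hlog : Nat.log p (4 * k) < Nat.log p (4 * k) + 1 := Nat.lt_succ_self _
    have hm := hp.emultiplicity_choose (n := 4 * k) (k := 2 * k)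
      (b := Nat.log p (4 * k) + 1) (by omega) hlog
    have hmem : 1 ∈ {i ∈ Ico 1 (Nat.log p (4 * k) + 1) |
        p ^ i ≤ 2 * k % p ^ i + (4 * k - 2 * k) % p ^ i} := by
      rw [mem_filter, mem_Ico]
      refine ⟨⟨le_refl _, ?_⟩, ?_⟩
      · have : 1 ≤ Nat.log p (4 * k) := Nat.le_log_of_pow_le hp.one_lt (by rw [pow_one]; omega)
        omega
      · have hmod : 2 * k % p = 2 * k - p := by
          rw [Nat.mod_eq_sub_mod hple2k, Nat.mod_eq_of_lt (by omega)]
        have h42 : 4 * k - 2 * k = 2 * k := by omega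
        rw [pow_one, h42, hmod]
        omega
    have hcard : (1 : ℕ) ≤ #{i ∈ Ico 1 (Nat.log p (4 * k) + 1) |
        p ^ i ≤ 2 * k % p ^ i + (4 * k - 2 * k) % p ^ i} :=
      Finset.card_pos.mpr ⟨1, hmem⟩
    have : (1 : ℕ∞) ≤ emultiplicity p (Nat.choose (4 * k) (2 * k)) := by
      rw [hm]; exact_mod_cast hcard
    simpa using pow_dvd_of_le_emultiplicity this
  calc p ^ 2 = p * p := sq p
  _ ∣ _ := mul_dvd_mul d1 d2
end

section
/- Let p be an odd prime and let k be an integer with p/4 < k < p. Then p divides C(2k,k) * C(4k,2k). -/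
theorem stmt_9 (p : ℕ) (hp : p.Prime) (hodd : Odd p) (k : ℕ)
    (h1 : p < 4 * k) (h2 : k < p) :
    p ∣ Nat.choose (2 * k) k * Nat.choose (4 * k) (2 * k) := by
  rcases le_or_gt p (2 * k) with h | h
  · exact Dvd.dvd.mul_right (hp.dvd_choose h2 (by omega) h) _
  · exact Dvd.dvd.mul_left (hp.dvd_choose h (by omega) (by omega)) _
end

section
/- Let p be an odd prime and let k be an integer with p/6 < k < p. Then p divides C(3k,k) * C(6k,3k). -/
lemma aux_dvd_choose_of_mod_lt {p n k : ℕ} (hp : p.Prime) (h : n % p < k % p) :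
    p ∣ Nat.choose n k := by
  haveI : Fact p.Prime := ⟨hp⟩
  have H := Choose.choose_modEq_choose_mod_mul_choose_div_nat (n := n) (k := k) (p := p)
  rw [Nat.choose_eq_zero_of_lt h, zero_mul] at H
  exact (Nat.modEq_zero_iff_dvd).mp H

theorem stmt_10 (p : ℕ) (hp : p.Prime) (hodd : Odd p) (k : ℕ)
    (h1 : p < 6 * k) (h2 : k < p) :
    p ∣ Nat.choose (3 * k) k * Nat.choose (6 * k) (3 * k) := by
  have hk : 0 < k := by omega
  rcases lt_or_ge (2 * k) p with hB | hB
  · rcases le_or_gt p (3 * k) with hA | hA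
    · exact Dvd.dvd.mul_right
        (hp.dvd_choose (by omega) (by omega) hA) _
    · exact Dvd.dvd.mul_left
        (hp.dvd_choose (by omega) (by omega) (by omega)) _
  · -- p ≤ 2k, and p odd so p ≠ 2k
    have hne : p ≠ 2 * k := by
      rintro rfl
      exact (Nat.not_odd_iff_even.mpr ⟨k, by ring⟩) hodd
    have hplt : p < 2 * k := lt_of_le_of_ne hB hne
    rcases le_or_gt (2 * p) (3 * k) with hC | hC
    · -- p ∣ C(3k, k)
      refine Dvd.dvd.mul_right (aux_dvd_choose_of_mod_lt hp ?_) _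
      have e1 : k % p = k := Nat.mod_eq_of_lt h2
      have e2 : 3 * k % p = 3 * k - 2 * p := by
        rw [Nat.mod_eq_sub_mod (by omega), Nat.mod_eq_sub_mod (by omega)]
        have : 3 * k - p - p = 3 * k - 2 * p := by omega
        rw [this, Nat.mod_eq_of_lt (by omega)]
      omega
    · -- p ∣ C(6k, 3k)
      refine Dvd.dvd.mul_left (aux_dvd_choose_of_mod_lt hp ?_) _
      have e1 : 3 * k % p = 3 * k - p := by
        rw [Nat.mod_eq_sub_mod (by omega), Nat.mod_eq_of_lt (by omega)]
      have e2 : 6 * k % p = 6 * k - 3 * p := by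
        rw [Nat.mod_eq_sub_mod (by omega), Nat.mod_eq_sub_mod (by omega),
          Nat.mod_eq_sub_mod (by omega)]
        have : 6 * k - p - p - p = 6 * k - 3 * p := by omega
        rw [this, Nat.mod_eq_of_lt (by omega)]
      omega
end

section
/- Let p be an odd prime and let k, r be integers in {0, 1, ..., p-1} with k + r >= p. Then p^2 divides C(3k,k) * C(6k,3k) * C(3r,r) * C(6r,3r). -/
/-- Carry lemma: if there is a carry in the last base-`p` digit when adding
`a` and `b`, then `p` divides `choose (a + b) b`. -/
lemma carry_dvd_choose {p a b : ℕ} (hp : p.Prime) (h : p ≤ b % p + a % p) :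
    p ∣ Nat.choose (a + b) b := by
  have hpb : p ≤ a + b := by
    have h1 := Nat.mod_le b p
    have h2 := Nat.mod_le a p
    omega
  have hlog : 0 < Nat.log p (a + b) := Nat.log_pos hp.one_lt hpb
  have hnb : Nat.log p (a + b) < Nat.log p (a + b) + 1 := Nat.lt_succ_self _
  have hmul := Nat.Prime.emultiplicity_choose' (b := Nat.log p (a + b) + 1) hp hnb
  have h1 : (1 : ℕ) ∈ Finset.filter (fun i => p ^ i ≤ b % p ^ i + a % p ^ i)
      (Finset.Ico 1 (Nat.log p (a + b) + 1)) := by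
    simp only [Finset.mem_filter, Finset.mem_Ico]
    refine ⟨⟨le_refl _, by omega⟩, by simpa using h⟩
  have hcard : 1 ≤ (Finset.filter (fun i => p ^ i ≤ b % p ^ i + a % p ^ i)
      (Finset.Ico 1 (Nat.log p (a + b) + 1))).card :=
    Finset.card_pos.mpr ⟨1, h1⟩
  have : (1 : ℕ∞) ≤ emultiplicity p (Nat.choose (a + b) b) := by
    rw [hmul]
    exact_mod_cast hcard
  simpa using pow_dvd_of_le_emultiplicity (k := 1) this

lemma two_mod_sub {p x : ℕ} (h1 : p ≤ x) (h2 : x < 2 * p) : x % p = x - p := by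
  rw [Nat.mod_eq_sub_mod h1, Nat.mod_eq_of_lt (by omega)]

lemma three_mod_sub {p x : ℕ} (h1 : 2 * p ≤ x) (h2 : x < 3 * p) : x % p = x - 2 * p := by
  rw [Nat.mod_eq_sub_mod (by omega), Nat.mod_eq_sub_mod (by omega),
    Nat.mod_eq_of_lt (by omega)]
  omega

/-- If `p ≤ 6k` and `k < p`, then `p` divides `C(3k,k) * C(6k,3k)`. -/
lemma pair_dvd {p k : ℕ} (hp : p.Prime) (h6 : p ≤ 6 * k) (hkp : k < p) :
    p ∣ Nat.choose (3 * k) k * Nat.choose (6 * k) (3 * k) := by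
  have hkmod : k % p = k := Nat.mod_eq_of_lt hkp
  by_cases h3 : 3 * k < p
  · -- carry in 3k + 3k, since 6k ≥ p
    refine Dvd.dvd.mul_left ?_ _
    have : p ∣ Nat.choose (3 * k + 3 * k) (3 * k) := by
      refine carry_dvd_choose hp ?_
      rw [Nat.mod_eq_of_lt h3]; omega
    simpa [show 3 * k + 3 * k = 6 * k by ring] using this
  push_neg at h3
  by_cases h2 : 2 * k < p
  · -- carry in k + 2k since 3k ≥ p
    refine Dvd.dvd.mul_right ?_ _
    have : p ∣ Nat.choose (2 * k + k) k := by
      refine carry_dvd_choose hp ?_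
      rw [hkmod, Nat.mod_eq_of_lt h2]; omega
    simpa [show 2 * k + k = 3 * k by ring] using this
  push_neg at h2
  by_cases h32 : 3 * k < 2 * p
  · -- carry in 3k + 3k: (3k mod p) = 3k - p, sum = 6k - 2p ≥ p since 2k ≥ p
    refine Dvd.dvd.mul_left ?_ _
    have : p ∣ Nat.choose (3 * k + 3 * k) (3 * k) := by
      refine carry_dvd_choose hp ?_
      rw [two_mod_sub h3 h32]; omega
    simpa [show 3 * k + 3 * k = 6 * k by ring] using this
  push_neg at h32
  · -- carry in k + 2k: k + (2k - p) = 3k - p ≥ p since 3k ≥ 2p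
    refine Dvd.dvd.mul_right ?_ _
    have : p ∣ Nat.choose (2 * k + k) k := by
      refine carry_dvd_choose hp ?_
      rw [hkmod, two_mod_sub h2 (by omega)]; omega
    simpa [show 2 * k + k = 3 * k by ring] using this

/-- If `5p ≤ 6k` and `k < p`, then `p²` divides `C(3k,k) * C(6k,3k)`. -/
lemma pair_dvd_sq {p k : ℕ} (hp : p.Prime) (h6 : 5 * p ≤ 6 * k) (hkp : k < p) :
    p ^ 2 ∣ Nat.choose (3 * k) k * Nat.choose (6 * k) (3 * k) := by
  have hkmod : k % p = k := Nat.mod_eq_of_lt hkp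
  have d1 : p ∣ Nat.choose (3 * k) k := by
    have : p ∣ Nat.choose (2 * k + k) k := by
      refine carry_dvd_choose hp ?_
      rw [hkmod, two_mod_sub (by omega) (by omega)]; omega
    simpa [show 2 * k + k = 3 * k by ring] using this
  have d2 : p ∣ Nat.choose (6 * k) (3 * k) := by
    have : p ∣ Nat.choose (3 * k + 3 * k) (3 * k) := by
      refine carry_dvd_choose hp ?_
      rw [three_mod_sub (by omega) (by omega)]; omega
    simpa [show 3 * k + 3 * k = 6 * k by ring] using this
  rw [pow_two]
  exact mul_dvd_mul d1 d2

theorem stmt_11 (p : ℕ) (hp : p.Prime) (hodd : Odd p) (k r : ℕ)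
    (hk : k ≤ p - 1) (hr : r ≤ p - 1) (hkr : p ≤ k + r) :
    p ^ 2 ∣ Nat.choose (3 * k) k * Nat.choose (6 * k) (3 * k) *
      (Nat.choose (3 * r) r * Nat.choose (6 * r) (3 * r)) := by
  have hp2 : 2 ≤ p := hp.two_le
  have hp3 : 3 ≤ p := by
    rcases hodd with ⟨m, hm⟩; omega
  have hkp : k < p := by omega
  have hrp : r < p := by omega
  by_cases h6k : p ≤ 6 * k
  · by_cases h6r : p ≤ 6 * r
    · rw [pow_two]
      exact mul_dvd_mul (pair_dvd hp h6k hkp) (pair_dvd hp h6r hrp)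
    ·
      push_neg at h6r
      have : 5 * p ≤ 6 * k := by omega
      exact Dvd.dvd.mul_right (pair_dvd_sq hp this hkp) _
  · push_neg at h6k
    have : 5 * p ≤ 6 * r := by omega
    exact Dvd.dvd.mul_left (pair_dvd_sq hp this hrp) _
end
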